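/- The s-th factorial moment of the number of adjacent equalities S_{n,k} in a uniformly random k-multiset of {1,...,n} is E[S_{n,k}(S_{n,k}-1)···(S_{n,k}-s+1)] = (k)_s · (k-1)_s / (n+k-1)_s, where (x)_s denotes the falling factorial. -/

import Mathlib

/-- The set of weakly decreasing `k`-tuples with entries in `{1,...,n}`. -/
def multisetTuples (n k : ℕ) : Finset (Fin k → ℕ) :=
  (Fintype.piFinset fun _ : Fin k => Finset.Icc 1 n).filter
    fun ℓ => ∀ i j : Fin k, i ≤ j → ℓ j ≤ ℓ i

/-- The number of adjacent equalities `ℓ_j = ℓ_{j+1}` in a tuple. -/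
def sigmaEq {k : ℕ} (ℓ : Fin k → ℕ) : ℕ :=
  (Finset.univ.filter fun p : Fin k × Fin k =>
    (p.2 : ℕ) = (p.1 : ℕ) + 1 ∧ ℓ p.1 = ℓ p.2).card

/-!
Encode `ℓ` by its gaps `g t = ℓ (t - 1) - ℓ t` for `t = 0, …, k`, with the conventions
`ℓ (-1) = n` and `ℓ k = 1`. This is a bijection onto the compositions of `n - 1` into `k + 1`
nonnegative parts, and `σ(ℓ)` is the number of inner parts `g 1, …, g (k - 1)` that vanish.
Writing `(σ)_s = s! * C(σ, s)` and double counting the pairs `(ℓ, J)` with `J` an `s`-set of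
vanishing inner parts: for each of the `C(k - 1, s)` sets `J`, the compositions vanishing on `J`
are the compositions of `n - 1` into the `k + 1 - s` remaining parts, `C(n + k - 1 - s, k - s)` of
them. The theorem is then the identity `(n + k - 1)_s * C(n + k - 1 - s, k - s) = (k)_s * C(n + k - 1, k)`.
-/

open Finset

theorem Finset.sum_choose_card_eq_sum_card_filter_subset {α ι : Type*} [DecidableEq ι]
    (s : Finset α) (I : Finset ι) (Z : α → Finset ι) (hZ : ∀ a ∈ s, Z a ⊆ I) (r : ℕ) :
    ∑ a ∈ s, (#(Z a)).choose r = ∑ J ∈ I.powersetCard r, #{a ∈ s | J ⊆ Z a} := by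
  refine Eq.trans ?_ (sum_card_bipartiteAbove_eq_sum_card_bipartiteBelow
    (r := fun a J => J ⊆ Z a))
  refine sum_congr rfl fun a ha => ?_
  rw [← card_powersetCard, bipartiteAbove]
  congr 1
  ext J
  simp only [mem_powersetCard, mem_filter]
  exact ⟨fun ⟨h, hc⟩ => ⟨⟨h.trans (hZ a ha), hc⟩, h⟩, fun ⟨⟨_, hc⟩, h⟩ => ⟨h, hc⟩⟩

section FinsuppAntidiag

variable {ι : Type*} [DecidableEq ι]

theorem Finset.filter_finsuppAntidiag_forall_eq_zero {μ : Type*} [AddCommMonoid μ]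
    [HasAntidiagonal μ] [DecidableEq μ] (s J : Finset ι) (m : μ) :
    {f ∈ s.finsuppAntidiag m | ∀ j ∈ J, f j = 0} = (s \ J).finsuppAntidiag m := by
  ext f
  simp only [mem_filter, mem_finsuppAntidiag]
  constructor
  · rintro ⟨⟨hsum, hsupp⟩, hJ⟩
    have hsupp' : f.support ⊆ s \ J := fun j hj =>
      mem_sdiff.2 ⟨hsupp hj, fun hjJ => Finsupp.mem_support_iff.1 hj (hJ j hjJ)⟩
    refine ⟨?_, hsupp'⟩
    rw [← hsum]
    exact sum_subset sdiff_subset fun j _ hj => Finsupp.notMem_support_iff.1 fun h => hj (hsupp' h)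
  · rintro ⟨hsum, hsupp⟩
    have hJ : ∀ j ∈ J, f j = 0 := fun j hj =>
      Finsupp.notMem_support_iff.1 fun h => (mem_sdiff.1 (hsupp h)).2 hj
    refine ⟨⟨?_, hsupp.trans sdiff_subset⟩, hJ⟩
    rw [← hsum]
    exact (sum_subset sdiff_subset fun j hjs hj => hJ j (by simpa [hjs] using hj)).symm

theorem Finset.sum_le_of_mem_finsuppAntidiag {s : Finset ι} {m : ℕ} {g : ι →₀ ℕ}
    (hg : g ∈ s.finsuppAntidiag m) (u : Finset ι) : ∑ t ∈ u, g t ≤ m := by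
  obtain ⟨hsum, hsupp⟩ := mem_finsuppAntidiag.1 hg
  calc ∑ t ∈ u, g t ≤ ∑ t ∈ u ∪ s, g t := sum_le_sum_of_subset subset_union_left
    _ = ∑ t ∈ s, g t := (sum_subset subset_union_right fun t _ ht =>
        Finsupp.notMem_support_iff.1 fun h => ht (hsupp h)).symm
    _ = m := hsum

end FinsuppAntidiag

theorem Nat.descFactorial_mul_choose_sub {N k s : ℕ} (hsk : s ≤ k) :
    N.descFactorial s * (N - s).choose (k - s) = k.descFactorial s * N.choose k := by
  rw [Nat.descFactorial_eq_factorial_mul_choose, Nat.descFactorial_eq_factorial_mul_choose,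
    mul_assoc, ← Nat.choose_mul hsk]
  ring

section Gaps

variable {n k : ℕ} {ℓ : Fin k → ℕ}

lemma mem_multisetTuples :
    ℓ ∈ multisetTuples n k ↔ (∀ i, 1 ≤ ℓ i ∧ ℓ i ≤ n) ∧ Antitone ℓ := by
  simp [multisetTuples, Antitone]

def padded (n : ℕ) (ℓ : Fin k → ℕ) : ℕ → ℕ
  | 0 => n
  | t + 1 => if h : t < k then ℓ ⟨t, h⟩ else 1

@[simp] lemma padded_zero : padded n ℓ 0 = n := rfl

lemma padded_succ (i : Fin k) : padded n ℓ (i + 1) = ℓ i := by simp [padded]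

lemma padded_of_lt {t : ℕ} (ht : k < t) : padded n ℓ t = 1 := by
  obtain ⟨u, rfl⟩ : ∃ u, t = u + 1 := ⟨t - 1, by omega⟩
  simp [padded, show ¬ u < k by omega]

lemma antitone_padded (hn : 1 ≤ n) (hℓ : ℓ ∈ multisetTuples n k) : Antitone (padded n ℓ) := by
  obtain ⟨hbound, hanti⟩ := mem_multisetTuples.1 hℓ
  refine antitone_nat_of_succ_le fun t => ?_
  rcases t with _ | t
  · simp only [padded]
    split_ifs
    exacts [(hbound _).2, hn]
  · simp only [padded]
    split_ifs
    · exact hanti (Fin.mk_le_mk.2 (by omega))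
    · omega
    · exact (hbound _).1
    · rfl

noncomputable def gaps (n : ℕ) (ℓ : Fin k → ℕ) : ℕ →₀ ℕ :=
  Finsupp.onFinset (range (k + 1)) (fun t => padded n ℓ t - padded n ℓ (t + 1)) fun t ht => by
    by_contra h
    simp only [mem_range, not_lt] at h
    simp [padded_of_lt (ℓ := ℓ) (n := n) (show k < t by omega),
      padded_of_lt (ℓ := ℓ) (n := n) (show k < t + 1 by omega)] at ht

lemma gaps_apply (t : ℕ) : gaps n ℓ t = padded n ℓ t - padded n ℓ (t + 1) := rfl

lemma gaps_of_val_eq_succ {i j : Fin k} (hij : (j : ℕ) = i + 1) : gaps n ℓ j = ℓ i - ℓ j := by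
  rw [gaps_apply, hij, padded_succ, ← hij, padded_succ]

def ofGaps (n : ℕ) (g : ℕ →₀ ℕ) (i : Fin k) : ℕ := n - ∑ t ∈ range (i + 1), g t

lemma sum_range_gaps (hn : 1 ≤ n) (hℓ : ℓ ∈ multisetTuples n k) (m : ℕ) :
    ∑ t ∈ range m, gaps n ℓ t = n - padded n ℓ m := by
  induction m with
  | zero => simp
  | succ m ih =>
    have hanti := antitone_padded hn hℓ
    have h₁ : padded n ℓ (m + 1) ≤ padded n ℓ m := hanti m.le_succ
    have h₀ : padded n ℓ m ≤ n := hanti m.zero_le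
    rw [sum_range_succ, ih, gaps_apply]
    omega

lemma gaps_mem_finsuppAntidiag (hn : 1 ≤ n) (hℓ : ℓ ∈ multisetTuples n k) :
    gaps n ℓ ∈ (range (k + 1)).finsuppAntidiag (n - 1) := by
  rw [mem_finsuppAntidiag, sum_range_gaps hn hℓ, padded_of_lt (Nat.lt_succ_self k)]
  exact ⟨rfl, Finsupp.support_onFinset_subset⟩

lemma ofGaps_gaps (hn : 1 ≤ n) (hℓ : ℓ ∈ multisetTuples n k) : ofGaps n (gaps n ℓ) = ℓ := by
  funext i
  have h := antitone_padded hn hℓ (Nat.zero_le (i + 1))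
  rw [ofGaps, sum_range_gaps hn hℓ, padded_succ] at *
  rw [padded_zero] at h
  omega

lemma ofGaps_mem_multisetTuples (hn : 1 ≤ n) {g : ℕ →₀ ℕ}
    (hg : g ∈ (range (k + 1)).finsuppAntidiag (n - 1)) :
    (ofGaps n g : Fin k → ℕ) ∈ multisetTuples n k := by
  refine mem_multisetTuples.2 ⟨fun i => ?_, fun i j hij => ?_⟩
  · have := sum_le_of_mem_finsuppAntidiag hg (range (i + 1))
    constructor <;> simp only [ofGaps] <;> omega
  · exact Nat.sub_le_sub_left (sum_le_sum_of_subset (range_mono (Nat.succ_le_succ hij))) n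

lemma padded_ofGaps (hn : 1 ≤ n) {g : ℕ →₀ ℕ} (hg : g ∈ (range (k + 1)).finsuppAntidiag (n - 1))
    {t : ℕ} (ht : t ≤ k + 1) : padded n (ofGaps n g : Fin k → ℕ) t = n - ∑ u ∈ range t, g u := by
  rcases t with _ | t
  · simp
  · by_cases htk : t < k
    · exact padded_succ (ℓ := (ofGaps n g : Fin k → ℕ)) ⟨t, htk⟩
    · obtain rfl : t = k := by omega
      rw [padded_of_lt (Nat.lt_succ_self _), (mem_finsuppAntidiag.1 hg).1]
      omega

lemma gaps_ofGaps (hn : 1 ≤ n) {g : ℕ →₀ ℕ} (hg : g ∈ (range (k + 1)).finsuppAntidiag (n - 1)) :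
    gaps n (ofGaps n g : Fin k → ℕ) = g := by
  ext t
  rw [gaps_apply]
  by_cases ht : t ≤ k
  · have := sum_le_of_mem_finsuppAntidiag hg (range (t + 1))
    rw [sum_range_succ] at this
    rw [padded_ofGaps hn hg (by omega), padded_ofGaps hn hg (by omega), sum_range_succ]
    omega
  · have hgt : g t = 0 := Finsupp.notMem_support_iff.1 fun h =>
      ht (by simpa [Nat.lt_succ_iff] using (mem_finsuppAntidiag.1 hg).2 h)
    rw [padded_of_lt (by omega), padded_of_lt (by omega), hgt]

lemma bijOn_gaps (hn : 1 ≤ n) :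
    Set.BijOn (gaps n) (multisetTuples n k : Set (Fin k → ℕ))
      ((range (k + 1)).finsuppAntidiag (n - 1) : Set (ℕ →₀ ℕ)) :=
  Set.InvOn.bijOn (f' := ofGaps n) ⟨fun _ hℓ => ofGaps_gaps hn hℓ, fun _ hg => gaps_ofGaps hn hg⟩
    (fun _ hℓ => gaps_mem_finsuppAntidiag hn hℓ) fun _ hg => ofGaps_mem_multisetTuples hn hg

lemma sigmaEq_eq_card_filter_gaps_eq_zero (hℓ : ℓ ∈ multisetTuples n k) :
    sigmaEq ℓ = #{t ∈ Ioo 0 k | gaps n ℓ t = 0} := by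
  have hanti := (mem_multisetTuples.1 hℓ).2
  refine card_bij (fun p _ => p.2) (fun p hp => ?_) (fun p hp q hq hpq => ?_) fun t ht => ?_
  · obtain ⟨hadj, heq⟩ := (mem_filter.1 hp).2
    refine mem_filter.2 ⟨mem_Ioo.2 ⟨by omega, p.2.isLt⟩, ?_⟩
    rw [gaps_of_val_eq_succ hadj, heq, Nat.sub_self]
  · have := (mem_filter.1 hp).2.1
    have := (mem_filter.1 hq).2.1
    exact Prod.ext (Fin.ext (by omega)) (Fin.ext hpq)
  · obtain ⟨⟨ht0, htk⟩, hgap⟩ := by simpa using ht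
    let i : Fin k := ⟨t - 1, by omega⟩
    let j : Fin k := ⟨t, htk⟩
    have hij : (j : ℕ) = i + 1 := by simp [i, j]; omega
    rw [gaps_of_val_eq_succ hij] at hgap
    have : ℓ j ≤ ℓ i := hanti (Fin.le_def.2 (by omega))
    exact ⟨(i, j), by simp [hij]; omega, rfl⟩

end Gaps

theorem sum_choose_sigmaEq {n k : ℕ} (hn : 1 ≤ n) (s : ℕ) :
    ∑ ℓ ∈ multisetTuples n k, (sigmaEq ℓ).choose s
      = (k - 1).choose s * (n + k - 1 - s).choose (k - s) := by
  let zeros (g : ℕ →₀ ℕ) : Finset ℕ := {t ∈ Ioo 0 k | g t = 0}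
  calc ∑ ℓ ∈ multisetTuples n k, (sigmaEq ℓ).choose s
        = ∑ ℓ ∈ multisetTuples n k, (#(zeros (gaps n ℓ))).choose s :=
          sum_congr rfl fun ℓ hℓ => by rw [sigmaEq_eq_card_filter_gaps_eq_zero hℓ]
    _ = ∑ g ∈ (range (k + 1)).finsuppAntidiag (n - 1), (#(zeros g)).choose s :=
          let h := bijOn_gaps (k := k) hn
          sum_nbij _ h.mapsTo h.injOn h.surjOn fun _ _ => rfl
    _ = ∑ J ∈ (Ioo 0 k).powersetCard s,
          #{g ∈ (range (k + 1)).finsuppAntidiag (n - 1) | J ⊆ zeros g} :=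
          sum_choose_card_eq_sum_card_filter_subset _ _ _ (fun _ _ => filter_subset _ _) s
    _ = ∑ J ∈ (Ioo 0 k).powersetCard s, (n + k - 1 - s).choose (k - s) := by
          refine sum_congr rfl fun J hJ => ?_
          obtain ⟨hJsub, hJcard⟩ := mem_powersetCard.1 hJ
          have hs : s ≤ k - 1 := by simpa [hJcard] using card_le_card hJsub
          have hzeros : ∀ g : ℕ →₀ ℕ, J ⊆ zeros g ↔ ∀ t ∈ J, g t = 0 := fun g =>
            ⟨fun h t ht => (mem_filter.1 (h ht)).2, fun h t ht => mem_filter.2 ⟨hJsub ht, h t ht⟩⟩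
          simp_rw [hzeros]
          rw [filter_finsuppAntidiag_forall_eq_zero, card_finsuppAntidiag_nat_eq_choose,
            card_sdiff_of_subset (hJsub.trans fun t ht => by simp at ht ⊢; omega), card_range,
            hJcard, show k + 1 - s + (n - 1) - 1 = n + k - 1 - s by omega]
          exact Nat.choose_symm_of_eq_add (by omega)
    _ = (k - 1).choose s * (n + k - 1 - s).choose (k - s) := by simp

theorem sigma_factorial_moments_general (n k s : ℕ) (hn : 1 ≤ n) :
    (∑ ℓ ∈ multisetTuples n k, ((sigmaEq ℓ).descFactorial s : ℝ)) /
        ((n + k - 1).choose k : ℝ) =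
      (k.descFactorial s : ℝ) * ((k - 1).descFactorial s : ℝ) /
        ((n + k - 1).descFactorial s : ℝ) := by
  have hsum : ∑ ℓ ∈ multisetTuples n k, (sigmaEq ℓ).descFactorial s
      = (k - 1).descFactorial s * (n + k - 1 - s).choose (k - s) := by
    simp_rw [Nat.descFactorial_eq_factorial_mul_choose, ← mul_sum, sum_choose_sigmaEq hn, mul_assoc]
  rw [← Nat.cast_sum, hsum]
  rcases le_or_gt s (k - 1) with hs | hs
  · have hchoose : ((n + k - 1).choose k : ℝ) ≠ 0 := by
      exact_mod_cast (Nat.choose_pos (by omega)).ne'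
    have hdesc : ((n + k - 1).descFactorial s : ℝ) ≠ 0 := by
      exact_mod_cast (Nat.descFactorial_pos.2 (by omega)).ne'
    rw [div_eq_div_iff hchoose hdesc]
    have key : (k - 1).descFactorial s * (n + k - 1 - s).choose (k - s)
        * (n + k - 1).descFactorial s
        = k.descFactorial s * (k - 1).descFactorial s * (n + k - 1).choose k := by
      rw [mul_assoc, mul_comm _ ((n + k - 1).descFactorial s),
        Nat.descFactorial_mul_choose_sub (show s ≤ k by omega)]
      ring
    exact_mod_cast key
  · simp [Nat.descFactorial_eq_zero_iff_lt.2 hs]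

theorem sigma_factorial_moments (n k s : ℕ) (hn : 1 ≤ n) (hk : 1 ≤ k) (hs : 1 ≤ s) :
    (∑ ℓ ∈ multisetTuples n k, ((sigmaEq ℓ).descFactorial s : ℝ)) /
        ((n + k - 1).choose k : ℝ) =
      (k.descFactorial s : ℝ) * ((k - 1).descFactorial s : ℝ) /
        ((n + k - 1).descFactorial s : ℝ) :=
  sigma_factorial_moments_general n k s hn
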